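/- Let d > 1 be odd and let gamma >= 0, delta be integers with d <= 2*delta <= 2(d-1). Then the Gaussian binomial coefficient [2(gamma*d+delta) choose gamma*d+delta]_{q^2} is divisible by the d-th cyclotomic polynomial Phi_d(q) in Z[q]. -/

import Mathlib

/-!
Let `ζ` be a primitive `d`-th root of unity in `ℂ`. It is a simple root of `q^i - 1` exactly when
`d ∣ i`, so its multiplicity in `∏_{i=1}^m (q^i - 1)` is `⌊m/d⌋`, and by
`[n, k]_q ∏_{i ≤ k} (q^i - 1) ∏_{i ≤ n-k} (q^i - 1) = ∏_{i ≤ n} (q^i - 1)` its multiplicity in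
`[2j, j]_q` is `⌊2j/d⌋ - 2⌊j/d⌋`, which is `1` when `2 (j mod d) ≥ d`. Hence the minimal
polynomial `Φ_d` of `ζ` divides `[2j, j]_q`, and for odd `d` we have
`Φ_d(q) ∣ Φ_d(q) Φ_{2d}(q) = Φ_d(q^2) ∣ [2j, j]_{q^2}`.
-/

open Polynomial

/-- The Gaussian binomial coefficient `[n choose k]_q` as a polynomial in `ℤ[q]`,
defined via the `q`-Pascal recurrence `[n+1, k+1]_q = [n, k]_q + q^(k+1) [n, k+1]_q`. -/
noncomputable def qbinom : ℕ → ℕ → Polynomial ℤ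
  | _, 0 => 1
  | 0, _ + 1 => 0
  | n + 1, k + 1 => qbinom n k + Polynomial.X ^ (k + 1) * qbinom n (k + 1)

lemma qbinom_zero_right (n : ℕ) : qbinom n 0 = 1 := by cases n <;> rfl

lemma qbinom_eq_zero_of_lt : ∀ {n k : ℕ}, n < k → qbinom n k = 0
  | 0, _ + 1, _ => rfl
  | n + 1, k + 1, h => by
    rw [qbinom, qbinom_eq_zero_of_lt (by omega), qbinom_eq_zero_of_lt (by omega), mul_zero,
      add_zero]

lemma qbinom_self : ∀ n : ℕ, qbinom n n = 1
  | 0 => rfl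
  | n + 1 => by rw [qbinom, qbinom_self n, qbinom_eq_zero_of_lt n.lt_succ_self, mul_zero, add_zero]

/-- `(X - 1)^m` times the `q`-factorial `[m]_q!`. -/
noncomputable def qfac (R : Type*) [CommRing R] (m : ℕ) : R[X] :=
  ∏ i ∈ Finset.range m, (X ^ (i + 1) - 1)

section qfac

variable {R : Type*} [CommRing R]

@[simp] lemma qfac_zero : qfac R 0 = 1 := rfl

lemma qfac_succ (m : ℕ) : qfac R (m + 1) = qfac R m * (X ^ (m + 1) - 1) :=
  Finset.prod_range_succ _ _

lemma map_qfac {S : Type*} [CommRing S] (f : R →+* S) (m : ℕ) : (qfac R m).map f = qfac S m := by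
  simp [qfac, Polynomial.map_prod]

lemma qfac_ne_zero [IsDomain R] (m : ℕ) : qfac R m ≠ 0 :=
  Finset.prod_ne_zero_iff.mpr fun i _ h ↦ by simpa using congrArg (eval 0) h

end qfac

theorem qbinom_mul_qfac_mul_qfac : ∀ m k : ℕ,
    qbinom (m + k) k * qfac ℤ k * qfac ℤ m = qfac ℤ (m + k)
  | m, 0 => by simp [qbinom_zero_right]
  | 0, k + 1 => by simp [qbinom_self]
  | m + 1, k + 1 => by
    have hleft := qbinom_mul_qfac_mul_qfac (m + 1) k
    have hright := qbinom_mul_qfac_mul_qfac m (k + 1)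
    rw [show m + 1 + k = m + k + 1 by omega] at hleft
    rw [show m + (k + 1) = m + k + 1 by omega] at hright
    rw [show m + 1 + (k + 1) = m + k + 1 + 1 by omega, qbinom, qfac_succ (m + k + 1)]
    linear_combination (X ^ (k + 1) - 1) * hleft + X ^ (k + 1) * (X ^ (m + 1) - 1) * hright
      + qbinom (m + k + 1) k * qfac ℤ (m + 1) * qfac_succ (R := ℤ) k
      + X ^ (k + 1) * qbinom (m + k + 1) (k + 1) * qfac ℤ (k + 1) * qfac_succ (R := ℤ) m

namespace IsPrimitiveRoot

variable {K : Type*} [Field K] [CharZero K] {ζ : K} {d : ℕ}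

lemma rootMultiplicity_X_pow_sub_one (hζ : IsPrimitiveRoot ζ d) {n : ℕ} (hn : n ≠ 0) :
    rootMultiplicity ζ (X ^ n - 1 : K[X]) = if d ∣ n then 1 else 0 := by
  have hroot : IsRoot (X ^ n - 1 : K[X]) ζ ↔ d ∣ n := by
    simp [sub_eq_zero, hζ.pow_eq_one_iff_dvd]
  split_ifs with hdvd
  · have hsep : (X ^ n - 1 : K[X]).Separable := by
      simpa using separable_X_pow_sub_C (1 : K) (Nat.cast_ne_zero.mpr hn) one_ne_zero
    have hpos := rootMultiplicity_pos'.mpr ⟨hsep.ne_zero, hroot.mpr hdvd⟩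
    have := rootMultiplicity_le_one_of_separable hsep ζ
    omega
  · exact rootMultiplicity_eq_zero (hroot.not.mpr hdvd)

lemma rootMultiplicity_qfac (hζ : IsPrimitiveRoot ζ d) (m : ℕ) :
    rootMultiplicity ζ (qfac K m) = m / d := by
  induction m with
  | zero => simp
  | succ m ih =>
    have hne : qfac K m * (X ^ (m + 1) - 1) ≠ 0 := qfac_succ (R := K) m ▸ qfac_ne_zero (m + 1)
    rw [qfac_succ, rootMultiplicity_mul hne, ih,
      hζ.rootMultiplicity_X_pow_sub_one m.succ_ne_zero, Nat.succ_div]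

lemma rootMultiplicity_map_qbinom (hζ : IsPrimitiveRoot ζ d) (m k : ℕ) :
    rootMultiplicity ζ ((qbinom (m + k) k).map (Int.castRingHom K)) =
      (m + k) / d - k / d - m / d := by
  have h := congrArg (map (Int.castRingHom K)) (qbinom_mul_qfac_mul_qfac m k)
  simp only [Polynomial.map_mul, map_qfac] at h
  have hne := h ▸ qfac_ne_zero (m + k)
  have hmult := congrArg (rootMultiplicity ζ) h
  rw [rootMultiplicity_mul hne, rootMultiplicity_mul (left_ne_zero_of_mul hne),
    hζ.rootMultiplicity_qfac, hζ.rootMultiplicity_qfac, hζ.rootMultiplicity_qfac] at hmult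
  omega

end IsPrimitiveRoot

lemma Nat.two_mul_div_of_le_two_mul_mod {d j : ℕ} (hd : 0 < d) (h : d ≤ 2 * (j % d)) :
    2 * j / d = 2 * (j / d) + 1 := by
  refine Nat.div_eq_of_lt_le ?_ ?_ <;>
  · have := Nat.div_add_mod j d
    have := Nat.mod_lt j hd
    nlinarith

theorem cyclotomic_dvd_qbinom_two_mul {d j : ℕ} (h : d ≤ 2 * (j % d)) :
    cyclotomic d ℤ ∣ qbinom (2 * j) j := by
  obtain rfl | hd := d.eq_zero_or_pos
  · simp
  obtain ⟨ζ, hζ⟩ : ∃ ζ : ℂ, IsPrimitiveRoot ζ d := ⟨_, Complex.isPrimitiveRoot_exp d hd.ne'⟩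
  have hmult : rootMultiplicity ζ ((qbinom (2 * j) j).map (Int.castRingHom ℂ)) = 1 := by
    rw [two_mul, hζ.rootMultiplicity_map_qbinom, ← two_mul,
      Nat.two_mul_div_of_le_two_mul_mod hd h]
    omega
  have hroot : ((qbinom (2 * j) j).map (Int.castRingHom ℂ)).IsRoot ζ :=
    (rootMultiplicity_pos'.mp (by omega)).2
  rw [cyclotomic_eq_minpoly hζ hd]
  exact minpoly.isIntegrallyClosed_dvd (hζ.isIntegral hd)
    (by rwa [aeval_def, eval₂_eq_eval_map, algebraMap_int_eq])

theorem cyclotomic_dvd_expand_cyclotomic {p n : ℕ} (hp : p.Prime) (hn : ¬p ∣ n)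
    (R : Type*) [CommRing R] : cyclotomic n R ∣ expand R p (cyclotomic n R) := by
  rw [cyclotomic_expand_eq_cyclotomic_mul hp hn]
  exact dvd_mul_left _ _

theorem stmt_19_general (d γ δ : ℕ) (hodd : Odd d)
    (h1 : d ≤ 2 * δ) (h2 : δ ≤ d - 1) :
    Polynomial.cyclotomic d ℤ ∣
      (qbinom (2 * (γ * d + δ)) (γ * d + δ)).comp (Polynomial.X ^ 2) := by
  have hmod : (γ * d + δ) % d = δ := by
    rw [Nat.mul_add_mod', Nat.mod_eq_of_lt (by have := hodd.pos; omega)]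
  have hdvd : cyclotomic d ℤ ∣ qbinom (2 * (γ * d + δ)) (γ * d + δ) :=
    cyclotomic_dvd_qbinom_two_mul (by rwa [hmod])
  rw [← expand_eq_comp_X_pow]
  have hexpand := map_dvd (expand ℤ 2) hdvd
  exact (cyclotomic_dvd_expand_cyclotomic Nat.prime_two hodd.not_two_dvd_nat ℤ).trans hexpand

theorem stmt_19 (d γ δ : ℕ) (hd : 1 < d) (hodd : Odd d)
    (h1 : d ≤ 2 * δ) (h2 : δ ≤ d - 1) :
    Polynomial.cyclotomic d ℤ ∣
      (qbinom (2 * (γ * d + δ)) (γ * d + δ)).comp (Polynomial.X ^ 2) :=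
  stmt_19_general d γ δ hodd h1 h2
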